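/- arXiv:2505.00973 — 2 statements merged into one kernel-verified Lean document; each statement's English description precedes it below -/
import Mathlib

section
/- Sufficiency for truncated instances: if a minimax-MDP satisfies the future-imposed conditions, then for every α ∈ {1,…,T}, every s_α ∈ F_{1→α}(s₁) and every x_α ∈ ℝ with L̃_α(s_α) ≤ x_α ≤ R_{⋆⇝α}(s_α), the truncated instance I_{α,s_α,x_α} admits a feasible policy. -/
/-- A minimax Markov Decision Process. -/
structure MinimaxMDP where
  /-- time horizon -/
  T : ℕ
  /-- ambient type of environment states -/
  State : Type
  /-- the ambient type of states is finite -/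
  fintype_state : Fintype State
  /-- the set of environment states available at each time -/
  S : ℕ → Set State
  /-- the initial environment state -/
  s1 : State
  /-- the environment state transition map -/
  F : ℕ → State → Set State
  /-- lower action bounds -/
  U : ℕ → State → ℝ
  /-- upper action bounds -/
  V : ℕ → State → ℝ
  /-- lower inventory bounds -/
  L : ℕ → State → ℝ
  /-- upper inventory bounds -/
  R : ℕ → State → ℝ

namespace MinimaxMDP

variable (M : MinimaxMDP)

/-- The structural hypotheses on a minimax-MDP. -/
def IsValid : Prop :=
  1 ≤ M.T ∧
  (∀ t, 1 ≤ t → t ≤ M.T → (M.S t).Nonempty) ∧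
  M.s1 ∈ M.S 1 ∧
  (∀ t s, 1 ≤ t → t + 1 ≤ M.T → s ∈ M.S t → (M.F t s).Nonempty ∧ M.F t s ⊆ M.S (t + 1)) ∧
  (∀ t s, 1 ≤ t → t + 1 ≤ M.T → s ∈ M.S t → M.U t s ≤ M.V t s) ∧
  M.L 1 M.s1 = 0 ∧ M.R 1 M.s1 = 0

/-- A compatible environment state trajectory on the time window `[α, β]`. -/
def EnvCompat (α β : ℕ) (s : ℕ → M.State) : Prop :=
  (∀ t, α ≤ t → t ≤ β → s t ∈ M.S t) ∧
  (∀ t, α ≤ t → t < β → s (t + 1) ∈ M.F t (s t))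

/-- `F_{α→β}(a)`: the set of endpoints of compatible environment trajectories starting at `a`. -/
def Reach (α β : ℕ) (a : M.State) : Set M.State :=
  {b | ∃ s : ℕ → M.State, M.EnvCompat α β s ∧ s α = a ∧ s β = b}

/-- `U_{α→β}(a, b)`: the maximal cumulative lower action bound along compatible trajectories. -/
noncomputable def Umax (α β : ℕ) (a b : M.State) : ℝ :=
  sSup {u | ∃ s : ℕ → M.State, M.EnvCompat α β s ∧ s α = a ∧ s β = b ∧
    u = ∑ t ∈ Finset.Ico α β, M.U t (s t)}

/-- `V_{α→β}(a, b)`: the minimal cumulative upper action bound along compatible trajectories. -/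
noncomputable def Vmin (α β : ℕ) (a b : M.State) : ℝ :=
  sInf {v | ∃ s : ℕ → M.State, M.EnvCompat α β s ∧ s α = a ∧ s β = b ∧
    v = ∑ t ∈ Finset.Ico α β, M.V t (s t)}

/-- `R_{β⇝α}(a)`. -/
noncomputable def Rto (β α : ℕ) (a : M.State) : ℝ :=
  sInf ((fun b => M.R β b - M.Umax α β a b) '' M.Reach α β a)

/-- `L_{β⇝α}(a)`. -/
noncomputable def Lto (β α : ℕ) (a : M.State) : ℝ :=
  sSup ((fun b => M.L β b - M.Vmin α β a b) '' M.Reach α β a)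

/-- `R_{⋆⇝α}(a)`. -/
noncomputable def Rstar (α : ℕ) (a : M.State) : ℝ :=
  sInf ((fun β => M.Rto β α a) '' Set.Icc α M.T)

/-- `L_{⋆⇝α}(a)`. -/
noncomputable def Lstar (α : ℕ) (a : M.State) : ℝ :=
  sSup ((fun β => M.Lto β α a) '' Set.Icc α M.T)

/-- `R_{⋆⇝α→[α+1]}(a)`. -/
noncomputable def RstarBr (α : ℕ) (a : M.State) : ℝ :=
  sInf ((fun b => M.Rstar (α + 1) b) '' M.F α a)

/-- `L_{⋆⇝α→[α+1]}(a)`. -/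
noncomputable def LstarBr (α : ℕ) (a : M.State) : ℝ :=
  sSup ((fun b => M.Lstar (α + 1) b) '' M.F α a)

/-- The future-imposed conditions. -/
def FutureImposed : Prop :=
  M.Lstar 1 M.s1 ≤ M.Rstar 1 M.s1 ∧
  ∀ α, 2 ≤ α → α ≤ M.T → ∀ a ∈ M.Reach 1 (α - 1) M.s1,
    M.LstarBr (α - 1) a ≤ M.RstarBr (α - 1) a

/-- A `π`-compatible partial trajectory on `[α, β]`. -/
def PiCompat (π : ℕ → M.State → ℝ → ℝ) (α β : ℕ) (s : ℕ → M.State) (x : ℕ → ℝ) : Prop :=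
  M.EnvCompat α β s ∧ ∀ t, α ≤ t → t < β → x (t + 1) = x t + π t (s t) (x t)

/-- A feasible partial trajectory on `[α, β]`. -/
def FeasibleTraj (α β : ℕ) (s : ℕ → M.State) (x : ℕ → ℝ) : Prop :=
  (∀ t, α ≤ t → t < β →
    M.U t (s t) ≤ x (t + 1) - x t ∧ x (t + 1) - x t ≤ M.V t (s t)) ∧
  (∀ t, α ≤ t → t ≤ β → M.L t (s t) ≤ x t ∧ x t ≤ M.R t (s t))

/-- A feasible policy: every `π`-compatible full trajectory is feasible. -/
def FeasiblePolicy (π : ℕ → M.State → ℝ → ℝ) : Prop :=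
  ∀ s x, M.PiCompat π 1 M.T s x → s 1 = M.s1 → x 1 = 0 → M.FeasibleTraj 1 M.T s x

end MinimaxMDP

namespace MinimaxMDP

variable (M : MinimaxMDP)

/-- `L̃_β(b)`: the minimum of `R_{⋆⇝1}(s₁) + V_{1→β}(s₁, b)` together with all quantities
`R_{⋆⇝α−1→[α]}(s_{α−1}) + V_{α→β}(s_α, b)` over `α ∈ {2,…,β}`, `s_{α−1} ∈ F_{1→α−1}(s₁)`
and `s_α ∈ F_{α−1}(s_{α−1})` with `b ∈ F_{α→β}(s_α)`. -/
noncomputable def Ltilde (β : ℕ) (b : M.State) : ℝ :=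
  sInf (insert (M.Rstar 1 M.s1 + M.Vmin 1 β M.s1 b)
    {r | ∃ α a a', 2 ≤ α ∧ α ≤ β ∧ a ∈ M.Reach 1 (α - 1) M.s1 ∧ a' ∈ M.F (α - 1) a ∧
      b ∈ M.Reach α β a' ∧ r = M.RstarBr (α - 1) a + M.Vmin α β a' b})

end MinimaxMDP

namespace MinimaxMDP

/-- The truncated instance `I_{α, a, xα}` admits a feasible policy: there is a family of
decision functions for times `α,…,T−1` such that every compatible partial trajectory starting
from the system state `(a, xα)` at time `α` is feasible on `[α, T]`. -/
def FeasibleFrom (M : MinimaxMDP) (α : ℕ) (a : M.State) (xα : ℝ) : Prop :=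
  ∃ π : ℕ → M.State → ℝ → ℝ,
    ∀ s x, M.PiCompat π α M.T s x → s α = a → x α = xα → M.FeasibleTraj α M.T s x

end MinimaxMDP

section Aux
namespace MinimaxMDP

variable (M : MinimaxMDP)

/-! ### Gluing of environment trajectories -/

lemma envCompat_glue {α' α β : ℕ} (hβ : α ≤ β)
    {s₁ s₂ : ℕ → M.State} (h1 : M.EnvCompat α' α s₁) (h2 : M.EnvCompat α β s₂)
    (heq : s₁ α = s₂ α) :
    M.EnvCompat α' β (fun t => if t < α then s₁ t else s₂ t) := by
  constructor
  · intro t ht1 ht2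
    by_cases h : t < α
    · simpa [h] using h1.1 t ht1 h.le
    · simpa [h] using h2.1 t (le_of_not_gt h) ht2
  · intro t ht1 ht2
    by_cases h : t + 1 < α
    · have h' : t < α := by omega
      simpa [h, h'] using h1.2 t ht1 (by omega)
    · by_cases h' : t < α
      · have he : t + 1 = α := by omega
        simp only [if_neg h, if_pos h']
        rw [he, ← heq, ← he]
        exact h1.2 t ht1 (by omega)
      · simpa [h, h'] using h2.2 t (le_of_not_gt h') ht2

lemma glue_sum {α' α β : ℕ} (hα : α' ≤ α) (hβ : α ≤ β) (s₁ s₂ : ℕ → M.State)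
    (g : ℕ → M.State → ℝ) :
    ∑ t ∈ Finset.Ico α' β, g t ((fun t => if t < α then s₁ t else s₂ t) t)
      = ∑ t ∈ Finset.Ico α' α, g t (s₁ t) + ∑ t ∈ Finset.Ico α β, g t (s₂ t) := by
  rw [← Finset.sum_Ico_consecutive _ hα hβ]
  congr 1
  · exact Finset.sum_congr rfl fun t ht => by simp [(Finset.mem_Ico.mp ht).2]
  · exact Finset.sum_congr rfl fun t ht => by simp [not_lt.mpr (Finset.mem_Ico.mp ht).1]

lemma reach_trans {α' α β : ℕ} (hα : α' ≤ α) (hβ : α ≤ β) {a' a b : M.State}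
    (h1 : a ∈ M.Reach α' α a') (h2 : b ∈ M.Reach α β a) : b ∈ M.Reach α' β a' := by
  obtain ⟨s₁, hc1, hs1, he1⟩ := h1
  obtain ⟨s₂, hc2, hs2, he2⟩ := h2
  refine ⟨_, M.envCompat_glue hβ hc1 hc2 (he1.trans hs2.symm), ?_, ?_⟩
  · by_cases h : α' < α
    · simp [h, hs1]
    · have hh : α' = α := by omega
      simp only [if_neg h]
      rw [hh, hs2, ← he1, ← hh, hs1]
  · simp [not_lt.mpr hβ, he2]

lemma mem_S_of_reach {α β : ℕ} (hβ : α ≤ β) {a b : M.State}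
    (h : b ∈ M.Reach α β a) : b ∈ M.S β := by
  obtain ⟨s, hc, _, he⟩ := h
  exact he ▸ hc.1 β hβ le_rfl

lemma mem_S_of_reach' {α β : ℕ} (hβ : α ≤ β) {a b : M.State}
    (h : b ∈ M.Reach α β a) : a ∈ M.S α := by
  obtain ⟨s, hc, hs, _⟩ := h
  exact hs ▸ hc.1 α le_rfl hβ

lemma mem_reach_self {α : ℕ} {a : M.State} (haS : a ∈ M.S α) : a ∈ M.Reach α α a := by
  refine ⟨fun _ => a, ⟨fun t h1 h2 => ?_, fun t h1 h2 => by omega⟩, rfl, rfl⟩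
  have : t = α := le_antisymm h2 h1
  exact this ▸ haS

lemma reach_self {α : ℕ} {a : M.State} (haS : a ∈ M.S α) : M.Reach α α a = {a} := by
  ext b
  constructor
  · rintro ⟨s, _, hs, he⟩
    exact (he.symm.trans hs).symm ▸ rfl
  · rintro rfl
    exact M.mem_reach_self haS

lemma mem_reach_step (hM : M.IsValid) {t : ℕ} (ht1 : 1 ≤ t) (htT : t + 1 ≤ M.T)
    {a a' : M.State} (haS : a ∈ M.S t) (ha' : a' ∈ M.F t a) : a' ∈ M.Reach t (t + 1) a := by
  refine ⟨fun r => if r = t then a else a', ⟨?_, ?_⟩, by simp, by simp⟩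
  · intro r h1 h2
    by_cases h : r = t
    · simpa [h] using haS
    · have hr : r = t + 1 := by omega
      simpa [h, hr] using (hM.2.2.2.1 t a ht1 htT haS).2 ha'
  · intro r h1 h2
    have hr : r = t := by omega
    subst hr
    simpa using ha'

lemma reach_nonempty (hM : M.IsValid) {α β : ℕ} (hα : 1 ≤ α) (hβ : α ≤ β) (hT : β ≤ M.T)
    {a : M.State} (haS : a ∈ M.S α) : (M.Reach α β a).Nonempty := by
  induction β, hβ using Nat.le_induction with
  | base => exact ⟨a, M.mem_reach_self haS⟩
  | succ β hβ ih =>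
    obtain ⟨b, hb⟩ := ih (by omega)
    have hbS : b ∈ M.S β := M.mem_S_of_reach hβ hb
    obtain ⟨b', hb'⟩ := (hM.2.2.2.1 β b (by omega) hT hbS).1
    exact ⟨b', M.reach_trans hβ (Nat.le_succ β) hb
      (M.mem_reach_step hM (by omega) hT hbS hb')⟩

/-! ### Boundedness of the action-sum sets -/

lemma bddAbove_uset (α β : ℕ) (a b : M.State) :
    BddAbove {u | ∃ s : ℕ → M.State, M.EnvCompat α β s ∧ s α = a ∧ s β = b ∧
      u = ∑ t ∈ Finset.Ico α β, M.U t (s t)} := by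
  letI := M.fintype_state
  refine ⟨∑ t ∈ Finset.Ico α β, sSup (Set.range (M.U t)), ?_⟩
  rintro u ⟨s, _, _, _, rfl⟩
  exact Finset.sum_le_sum fun t _ => le_csSup (Set.finite_range _).bddAbove ⟨s t, rfl⟩

lemma bddBelow_vset (α β : ℕ) (a b : M.State) :
    BddBelow {v | ∃ s : ℕ → M.State, M.EnvCompat α β s ∧ s α = a ∧ s β = b ∧
      v = ∑ t ∈ Finset.Ico α β, M.V t (s t)} := by
  letI := M.fintype_state
  refine ⟨∑ t ∈ Finset.Ico α β, sInf (Set.range (M.V t)), ?_⟩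
  rintro v ⟨s, _, _, _, rfl⟩
  exact Finset.sum_le_sum fun t _ => csInf_le (Set.finite_range _).bddBelow ⟨s t, rfl⟩

/-! ### Basic facts about `Umax` and `Vmin` -/

lemma sum_le_umax {α β : ℕ} {a b : M.State} {s : ℕ → M.State}
    (hc : M.EnvCompat α β s) (hsa : s α = a) (hsb : s β = b) :
    ∑ t ∈ Finset.Ico α β, M.U t (s t) ≤ M.Umax α β a b :=
  le_csSup (M.bddAbove_uset α β a b) ⟨s, hc, hsa, hsb, rfl⟩

lemma vmin_le_sum {α β : ℕ} {a b : M.State} {s : ℕ → M.State}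
    (hc : M.EnvCompat α β s) (hsa : s α = a) (hsb : s β = b) :
    M.Vmin α β a b ≤ ∑ t ∈ Finset.Ico α β, M.V t (s t) :=
  csInf_le (M.bddBelow_vset α β a b) ⟨s, hc, hsa, hsb, rfl⟩

lemma umax_self {α : ℕ} {a : M.State} (haS : a ∈ M.S α) : M.Umax α α a a = 0 := by
  have hset : {u | ∃ s : ℕ → M.State, M.EnvCompat α α s ∧ s α = a ∧ s α = a ∧
      u = ∑ t ∈ Finset.Ico α α, M.U t (s t)} = {0} := by
    ext u
    simp only [Finset.Ico_self, Finset.sum_empty, Set.mem_setOf_eq, Set.mem_singleton_iff]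
    constructor
    · rintro ⟨s, _, _, _, rfl⟩; rfl
    · rintro rfl
      obtain ⟨s, hc, hs, _⟩ := M.mem_reach_self haS
      exact ⟨s, hc, hs, hs, rfl⟩
  rw [Umax, hset, csSup_singleton]

lemma vmin_self {α : ℕ} {a : M.State} (haS : a ∈ M.S α) : M.Vmin α α a a = 0 := by
  have hset : {v | ∃ s : ℕ → M.State, M.EnvCompat α α s ∧ s α = a ∧ s α = a ∧
      v = ∑ t ∈ Finset.Ico α α, M.V t (s t)} = {0} := by
    ext v
    simp only [Finset.Ico_self, Finset.sum_empty, Set.mem_setOf_eq, Set.mem_singleton_iff]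
    constructor
    · rintro ⟨s, _, _, _, rfl⟩; rfl
    · rintro rfl
      obtain ⟨s, hc, hs, _⟩ := M.mem_reach_self haS
      exact ⟨s, hc, hs, hs, rfl⟩
  rw [Vmin, hset, csInf_singleton]

/-- Subadditivity of `Vmin` along a splitting point. -/
lemma vmin_tri {α' α β : ℕ} (hα : α' ≤ α) (hβ : α ≤ β) {a' a b : M.State}
    (h1 : a ∈ M.Reach α' α a') (h2 : b ∈ M.Reach α β a) :
    M.Vmin α' β a' b ≤ M.Vmin α' α a' a + M.Vmin α β a b := by
  obtain ⟨s₁0, hc10, hs10, he10⟩ := h1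
  obtain ⟨s₂0, hc20, hs20, he20⟩ := h2
  have h1ne : {v | ∃ s : ℕ → M.State, M.EnvCompat α' α s ∧ s α' = a' ∧ s α = a ∧
      v = ∑ t ∈ Finset.Ico α' α, M.V t (s t)}.Nonempty := ⟨_, s₁0, hc10, hs10, he10, rfl⟩
  have h2ne : {v | ∃ s : ℕ → M.State, M.EnvCompat α β s ∧ s α = a ∧ s β = b ∧
      v = ∑ t ∈ Finset.Ico α β, M.V t (s t)}.Nonempty := ⟨_, s₂0, hc20, hs20, he20, rfl⟩
  have key : ∀ v1 ∈ {v | ∃ s : ℕ → M.State, M.EnvCompat α' α s ∧ s α' = a' ∧ s α = a ∧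
      v = ∑ t ∈ Finset.Ico α' α, M.V t (s t)},
      ∀ v2 ∈ {v | ∃ s : ℕ → M.State, M.EnvCompat α β s ∧ s α = a ∧ s β = b ∧
      v = ∑ t ∈ Finset.Ico α β, M.V t (s t)}, M.Vmin α' β a' b ≤ v1 + v2 := by
    rintro v1 ⟨s₁, hc1, hs1, he1, rfl⟩ v2 ⟨s₂, hc2, hs2, he2, rfl⟩
    have hglue := M.envCompat_glue hβ hc1 hc2 (he1.trans hs2.symm)
    have hstart : (fun t => if t < α then s₁ t else s₂ t) α' = a' := by
      by_cases h : α' < α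
      · simp [h, hs1]
      · have hh : α' = α := by omega
        simp only [if_neg h]
        rw [hh, hs2, ← he1, ← hh, hs1]
    have hend : (fun t => if t < α then s₁ t else s₂ t) β = b := by
      simp [not_lt.mpr hβ, he2]
    have := M.vmin_le_sum hglue hstart hend
    rwa [M.glue_sum hα hβ s₁ s₂ M.V] at this
  have step : ∀ v2 ∈ {v | ∃ s : ℕ → M.State, M.EnvCompat α β s ∧ s α = a ∧ s β = b ∧
      v = ∑ t ∈ Finset.Ico α β, M.V t (s t)},
      M.Vmin α' β a' b - M.Vmin α' α a' a ≤ v2 := by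
    intro v2 hv2
    have : M.Vmin α' β a' b - v2 ≤ M.Vmin α' α a' a :=
      le_csInf h1ne fun v1 hv1 => by linarith [key v1 hv1 v2 hv2]
    linarith
  have hle := le_csInf h2ne step
  simp only [Vmin] at hle ⊢
  linarith [hle]

/-- One-step superadditivity of `Umax`. -/
lemma umax_step (hM : M.IsValid) {t β : ℕ} (ht1 : 1 ≤ t) (htT : t + 1 ≤ M.T) (hβ : t + 1 ≤ β)
    {a a' b : M.State} (haS : a ∈ M.S t) (ha' : a' ∈ M.F t a)
    (hb : b ∈ M.Reach (t + 1) β a') :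
    M.U t a + M.Umax (t + 1) β a' b ≤ M.Umax t β a b := by
  obtain ⟨s₁, hc1, hs1, he1⟩ := M.mem_reach_step hM ht1 htT haS ha'
  obtain ⟨s₂0, hc20, hs20, he20⟩ := hb
  have h2ne : {u | ∃ s : ℕ → M.State, M.EnvCompat (t + 1) β s ∧ s (t + 1) = a' ∧ s β = b ∧
      u = ∑ r ∈ Finset.Ico (t + 1) β, M.U r (s r)}.Nonempty := ⟨_, s₂0, hc20, hs20, he20, rfl⟩
  have key : ∀ u ∈ {u | ∃ s : ℕ → M.State, M.EnvCompat (t + 1) β s ∧ s (t + 1) = a' ∧ s β = b ∧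
      u = ∑ r ∈ Finset.Ico (t + 1) β, M.U r (s r)}, u ≤ M.Umax t β a b - M.U t a := by
    rintro u ⟨s₂, hc2, hs2, he2, rfl⟩
    have hglue := M.envCompat_glue hβ hc1 hc2 (he1.trans hs2.symm)
    have hstart : (fun r => if r < t + 1 then s₁ r else s₂ r) t = a := by
      simp [Nat.lt_succ_self, hs1]
    have hend : (fun r => if r < t + 1 then s₁ r else s₂ r) β = b := by
      simp [not_lt.mpr hβ, he2]
    have hsum := M.sum_le_umax hglue hstart hend
    rw [M.glue_sum (Nat.le_succ t) hβ s₁ s₂ M.U] at hsum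
    rw [Nat.Ico_succ_singleton, Finset.sum_singleton, hs1] at hsum
    linarith
  have hle := csSup_le h2ne key
  simp only [Umax] at hle ⊢
  linarith [hle]

/-- One-step upper bound for `Vmin`. -/
lemma vmin_single (hM : M.IsValid) {t : ℕ} (ht1 : 1 ≤ t) (htT : t + 1 ≤ M.T)
    {a a' : M.State} (haS : a ∈ M.S t) (ha' : a' ∈ M.F t a) :
    M.Vmin t (t + 1) a a' ≤ M.V t a := by
  obtain ⟨s₁, hc1, hs1, he1⟩ := M.mem_reach_step hM ht1 htT haS ha'
  have := M.vmin_le_sum hc1 hs1 he1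
  rwa [Nat.Ico_succ_singleton, Finset.sum_singleton, hs1] at this

/-! ### Basic facts about `Rto`, `Lto`, `Rstar`, `Lstar` and the bracketed versions -/

lemma rto_le {α β : ℕ} {a b : M.State} (h : b ∈ M.Reach α β a) :
    M.Rto β α a ≤ M.R β b - M.Umax α β a b := by
  letI := M.fintype_state
  exact csInf_le ((Set.toFinite _).image _).bddBelow ⟨b, h, rfl⟩

lemma le_rto {α β : ℕ} {a : M.State} {x : ℝ} (hne : (M.Reach α β a).Nonempty)
    (h : ∀ b ∈ M.Reach α β a, x ≤ M.R β b - M.Umax α β a b) : x ≤ M.Rto β α a :=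
  le_csInf (hne.image _) (by rintro r ⟨b, hb, rfl⟩; exact h b hb)

lemma lto_ge {α β : ℕ} {a b : M.State} (h : b ∈ M.Reach α β a) :
    M.L β b - M.Vmin α β a b ≤ M.Lto β α a := by
  letI := M.fintype_state
  exact le_csSup ((Set.toFinite _).image _).bddAbove ⟨b, h, rfl⟩

lemma lto_le {α β : ℕ} {a : M.State} {x : ℝ} (hne : (M.Reach α β a).Nonempty)
    (h : ∀ b ∈ M.Reach α β a, M.L β b - M.Vmin α β a b ≤ x) : M.Lto β α a ≤ x :=
  csSup_le (hne.image _) (by rintro r ⟨b, hb, rfl⟩; exact h b hb)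

lemma rstar_le {α β : ℕ} {a : M.State} (h1 : α ≤ β) (h2 : β ≤ M.T) :
    M.Rstar α a ≤ M.Rto β α a :=
  csInf_le ((Set.finite_Icc α M.T).image _).bddBelow ⟨β, ⟨h1, h2⟩, rfl⟩

lemma le_rstar {α : ℕ} {a : M.State} {x : ℝ} (hαT : α ≤ M.T)
    (h : ∀ β, α ≤ β → β ≤ M.T → x ≤ M.Rto β α a) : x ≤ M.Rstar α a :=
  le_csInf ((Set.nonempty_Icc.mpr hαT).image _)
    (by rintro r ⟨β, hβ, rfl⟩; exact h β hβ.1 hβ.2)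

lemma lstar_ge {α β : ℕ} {a : M.State} (h1 : α ≤ β) (h2 : β ≤ M.T) :
    M.Lto β α a ≤ M.Lstar α a :=
  le_csSup ((Set.finite_Icc α M.T).image _).bddAbove ⟨β, ⟨h1, h2⟩, rfl⟩

lemma lstar_le {α : ℕ} {a : M.State} {x : ℝ} (hαT : α ≤ M.T)
    (h : ∀ β, α ≤ β → β ≤ M.T → M.Lto β α a ≤ x) : M.Lstar α a ≤ x :=
  csSup_le ((Set.nonempty_Icc.mpr hαT).image _)
    (by rintro r ⟨β, hβ, rfl⟩; exact h β hβ.1 hβ.2)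

lemma rstarBr_le {α : ℕ} {a b : M.State} (hb : b ∈ M.F α a) :
    M.RstarBr α a ≤ M.Rstar (α + 1) b := by
  letI := M.fintype_state
  exact csInf_le ((Set.toFinite _).image _).bddBelow ⟨b, hb, rfl⟩

lemma le_rstarBr {α : ℕ} {a : M.State} {x : ℝ} (hne : (M.F α a).Nonempty)
    (h : ∀ b ∈ M.F α a, x ≤ M.Rstar (α + 1) b) : x ≤ M.RstarBr α a :=
  le_csInf (hne.image _) (by rintro r ⟨b, hb, rfl⟩; exact h b hb)

lemma le_lstarBr {α : ℕ} {a b : M.State} (hb : b ∈ M.F α a) :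
    M.Lstar (α + 1) b ≤ M.LstarBr α a := by
  letI := M.fintype_state
  exact le_csSup ((Set.toFinite _).image _).bddAbove ⟨b, hb, rfl⟩

lemma lstarBr_le {α : ℕ} {a : M.State} {x : ℝ} (hne : (M.F α a).Nonempty)
    (h : ∀ b ∈ M.F α a, M.Lstar (α + 1) b ≤ x) : M.LstarBr α a ≤ x :=
  csSup_le (hne.image _) (by rintro r ⟨b, hb, rfl⟩; exact h b hb)

lemma rto_self {α : ℕ} {a : M.State} (haS : a ∈ M.S α) : M.Rto α α a = M.R α a := by
  rw [Rto, M.reach_self haS, Set.image_singleton, M.umax_self haS, sub_zero, csInf_singleton]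

lemma lto_self {α : ℕ} {a : M.State} (haS : a ∈ M.S α) : M.Lto α α a = M.L α a := by
  rw [Lto, M.reach_self haS, Set.image_singleton, M.vmin_self haS, sub_zero, csSup_singleton]

lemma rstar_le_R {α : ℕ} {a : M.State} (hT : α ≤ M.T) (haS : a ∈ M.S α) :
    M.Rstar α a ≤ M.R α a :=
  (M.rstar_le le_rfl hT).trans_eq (M.rto_self haS)

lemma L_le_lstar {α : ℕ} {a : M.State} (hT : α ≤ M.T) (haS : a ∈ M.S α) :
    M.L α a ≤ M.Lstar α a :=
  (M.lto_self haS).symm.trans_le (M.lstar_ge le_rfl hT)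

/-! ### Key inequalities -/

/-- Pulling `Lstar` back along a reachability relation. -/
lemma lstar_pull (hM : M.IsValid) {α' α : ℕ} (hα' : 1 ≤ α') (hα : α' ≤ α) (hT : α ≤ M.T)
    {a' a : M.State} (h : a ∈ M.Reach α' α a') :
    M.Lstar α a ≤ M.Lstar α' a' + M.Vmin α' α a' a := by
  apply M.lstar_le hT
  intro γ hγ1 hγ2
  have haS : a ∈ M.S α := M.mem_S_of_reach hα h
  apply M.lto_le (M.reach_nonempty hM (by omega) hγ1 hγ2 haS)
  intro c hc
  have h1 : M.L γ c - M.Vmin α' γ a' c ≤ M.Lto γ α' a' :=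
    M.lto_ge (M.reach_trans hα hγ1 h hc)
  have h2 : M.Lto γ α' a' ≤ M.Lstar α' a' := M.lstar_ge (le_trans hα hγ1) hγ2
  have h3 : M.Vmin α' γ a' c ≤ M.Vmin α' α a' a + M.Vmin α γ a c := M.vmin_tri hα hγ1 h hc
  linarith

/-- `LstarBr t a ≤ Lstar t a + V t a`. -/
lemma lstarBr_le_lstar_add (hM : M.IsValid) {t : ℕ} (ht1 : 1 ≤ t) (htT : t + 1 ≤ M.T)
    {a : M.State} (haS : a ∈ M.S t) :
    M.LstarBr t a ≤ M.Lstar t a + M.V t a := by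
  apply M.lstarBr_le (hM.2.2.2.1 t a ht1 htT haS).1
  intro b hb
  have hpull := M.lstar_pull hM ht1 (Nat.le_succ t) htT (M.mem_reach_step hM ht1 htT haS hb)
  have := M.vmin_single hM ht1 htT haS hb
  linarith

/-- `Rstar t a + U t a ≤ RstarBr t a`. -/
lemma rstar_add_le_rstarBr (hM : M.IsValid) {t : ℕ} (ht1 : 1 ≤ t) (htT : t + 1 ≤ M.T)
    {a : M.State} (haS : a ∈ M.S t) :
    M.Rstar t a + M.U t a ≤ M.RstarBr t a := by
  apply M.le_rstarBr (hM.2.2.2.1 t a ht1 htT haS).1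
  intro a' ha'
  have ha'S : a' ∈ M.S (t + 1) := (hM.2.2.2.1 t a ht1 htT haS).2 ha'
  apply M.le_rstar htT
  intro β hβ1 hβ2
  apply M.le_rto (M.reach_nonempty hM (by omega) hβ1 hβ2 ha'S)
  intro b hb
  have h1 : M.Rstar t a ≤ M.Rto β t a := M.rstar_le (by omega) hβ2
  have h2 : M.Rto β t a ≤ M.R β b - M.Umax t β a b :=
    M.rto_le (M.reach_trans (Nat.le_succ t) hβ1 (M.mem_reach_step hM ht1 htT haS ha') hb)
  have h3 := M.umax_step hM ht1 htT hβ1 haS ha' hb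
  linarith

/-- Under the future-imposed conditions, `Lstar ≤ Ltilde` at reachable states. -/
lemma lstar_le_ltilde (hM : M.IsValid) (hFIC : M.FutureImposed) {α : ℕ}
    (hα1 : 1 ≤ α) (hαT : α ≤ M.T) {a : M.State} (ha : a ∈ M.Reach 1 α M.s1) :
    M.Lstar α a ≤ M.Ltilde α a := by
  rw [Ltilde]
  apply le_csInf (Set.insert_nonempty _ _)
  intro r hr
  rcases hr with rfl | ⟨α', am, a', hα'2, hα'α, ham, ha', haR, rfl⟩
  · have hpull := M.lstar_pull hM le_rfl hα1 hαT ha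
    linarith [hFIC.1]
  · have hpull := M.lstar_pull hM (by omega) hα'α hαT haR
    have hstep : α' - 1 + 1 = α' := by omega
    have h1 : M.Lstar (α' - 1 + 1) a' ≤ M.LstarBr (α' - 1) am := M.le_lstarBr ha'
    rw [hstep] at h1
    have h2 := hFIC.2 α' hα'2 (le_trans hα'α hαT) am ham
    linarith

end MinimaxMDP
end Aux

/-- **Proposition (Sufficiency for truncated instances).** If a minimax-MDP satisfies the
future-imposed conditions, then for every `α ∈ {1,…,T}`, every `s_α ∈ F_{1→α}(s₁)` and every
`x_α ∈ ℝ` with `L̃_α(s_α) ≤ x_α ≤ R_{⋆⇝α}(s_α)`, the truncated instance `I_{α,s_α,x_α}`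
admits a feasible policy. -/
theorem truncated_instance_feasible (M : MinimaxMDP) (hM : M.IsValid)
    (hFIC : M.FutureImposed)
    (α : ℕ) (hα1 : 1 ≤ α) (hαT : α ≤ M.T)
    (a : M.State) (ha : a ∈ M.Reach 1 α M.s1)
    (xα : ℝ) (hxl : M.Ltilde α a ≤ xα) (hxr : xα ≤ M.Rstar α a) :
    M.FeasibleFrom α a xα := by
  refine ⟨fun t b x => max (M.U t b) (M.LstarBr t b - x), ?_⟩
  rintro s x ⟨henv, hstep⟩ hsa hxa
  have inv : ∀ t, α ≤ t → t ≤ M.T →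
      s t ∈ M.Reach 1 t M.s1 ∧ M.Lstar t (s t) ≤ x t ∧ x t ≤ M.Rstar t (s t) := by
    intro t ht
    induction t, ht using Nat.le_induction with
    | base =>
      intro _
      rw [hsa, hxa]
      exact ⟨ha, (M.lstar_le_ltilde hM hFIC hα1 hαT ha).trans hxl, hxr⟩
    | succ t ht ih =>
      intro hT1
      obtain ⟨hreach, hLx, hxR⟩ := ih (by omega)
      have h1t : 1 ≤ t := le_trans hα1 ht
      have hstS : s t ∈ M.S t := henv.1 t (by omega) (by omega)
      have hFst : s (t + 1) ∈ M.F t (s t) := henv.2 t (by omega) (by omega)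
      have hδ : x (t + 1) = x t + max (M.U t (s t)) (M.LstarBr t (s t) - x t) :=
        hstep t (by omega) (by omega)
      have hUB := M.rstar_add_le_rstarBr hM h1t hT1 hstS
      have hLV := M.lstarBr_le_lstar_add hM h1t hT1 hstS
      have hFIC2 := hFIC.2 (t + 1) (by omega) hT1 (s t) (by simpa using hreach)
      simp only [Nat.add_sub_cancel] at hFIC2
      refine ⟨M.reach_trans h1t (Nat.le_succ t) hreach
        (M.mem_reach_step hM h1t hT1 hstS hFst), ?_, ?_⟩
      · have hmem := M.le_lstarBr (α := t) hFst
        have hge : M.LstarBr t (s t) - x t ≤ max (M.U t (s t)) (M.LstarBr t (s t) - x t) :=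
          le_max_right _ _
        rw [hδ]; linarith
      · have hmem := M.rstarBr_le (α := t) hFst
        have hle : max (M.U t (s t)) (M.LstarBr t (s t) - x t) ≤ M.RstarBr t (s t) - x t :=
          max_le (by linarith) (by linarith)
        rw [hδ]; linarith
  refine ⟨?_, ?_⟩
  · intro t ht htT
    obtain ⟨hreach, hLx, hxR⟩ := inv t ht (by omega)
    have h1t : 1 ≤ t := le_trans hα1 ht
    have hstS : s t ∈ M.S t := henv.1 t (by omega) (by omega)
    have hδ : x (t + 1) = x t + max (M.U t (s t)) (M.LstarBr t (s t) - x t) :=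
      hstep t ht htT
    have hLV := M.lstarBr_le_lstar_add hM h1t (by omega) hstS
    have hUV := hM.2.2.2.2.1 t (s t) h1t (by omega) hstS
    constructor
    · rw [hδ]
      have := le_max_left (M.U t (s t)) (M.LstarBr t (s t) - x t)
      linarith
    · rw [hδ]
      have hmax : max (M.U t (s t)) (M.LstarBr t (s t) - x t) ≤ M.V t (s t) :=
        max_le hUV (by linarith)
      linarith
  · intro t ht htT
    obtain ⟨hreach, hLx, hxR⟩ := inv t ht htT
    have hstS : s t ∈ M.S t := henv.1 t (by omega) htT
    exact ⟨(M.L_le_lstar htT hstS).trans hLx, hxR.trans (M.rstar_le_R htT hstS)⟩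
end

section
/- Optimal robust competitive ratio for multi-period ordering with predictions: let an RMOwP instance satisfy d̲₀ > 0 and d̄₀ ≤ V_1 + … + V_T, and set Φ* = min_{t ∈ {1,…,T}} (p·d̲₀ + c·Σ_{s=t+1}^{T} V_s)/(p·d̲₀ + c·Δ_t). Then: (i) for every real Φ ≤ 1, there exists an ordering policy π with φ_π ≥ Φ if and only if Φ ≤ Φ*; (ii) the ordering policy π* defined by π*_t([a,b], x) = max(0, min(V_t, a·((1−Φ*)·p + Φ*·c)/c − x)) satisfies φ_{π*} = Φ*. In particular, the maximum over all ordering policies of the robust competitive ratio equals Φ* and is attained by π*. -/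
/-- An instance of the robust multi-period ordering with predictions (RMOwP) problem. -/
structure RMOwP where
  /-- number of preparation days -/
  T : ℕ
  /-- left endpoint of the initial prediction interval -/
  dlo : ℝ
  /-- right endpoint of the initial prediction interval -/
  dhi : ℝ
  /-- prediction-error upper bounds -/
  Δ : ℕ → ℝ
  /-- per-unit ordering cost -/
  c : ℝ
  /-- per-unit revenue -/
  p : ℝ
  /-- daily supply capacities -/
  Vcap : ℕ → ℝ

namespace RMOwP

variable (J : RMOwP)

/-- The structural hypotheses on an RMOwP instance. -/
def IsValid : Prop :=
  1 ≤ J.T ∧ 0 ≤ J.dlo ∧ J.dlo ≤ J.dhi ∧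
  (∀ t, 1 ≤ t → t + 1 ≤ J.T → J.Δ (t + 1) ≤ J.Δ t) ∧
  (∀ t, 1 ≤ t → t ≤ J.T → 0 ≤ J.Δ t) ∧
  J.Δ 1 ≤ J.dhi - J.dlo ∧
  0 < J.c ∧ J.c < J.p ∧
  (∀ t, 1 ≤ t → t ≤ J.T → 0 ≤ J.Vcap t)

/-- An admissible scenario: a regular prediction sequence `([lo_t, hi_t])_{t=1}^T` together
with a demand `d ∈ [lo_T, hi_T]`. -/
def Scenario (lo hi : ℕ → ℝ) (d : ℝ) : Prop :=
  J.dlo ≤ lo 1 ∧ hi 1 ≤ J.dhi ∧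
  (∀ t, 1 ≤ t → t ≤ J.T → lo t ≤ hi t ∧ hi t - lo t ≤ J.Δ t) ∧
  (∀ t, 2 ≤ t → t ≤ J.T → lo (t - 1) ≤ lo t ∧ hi t ≤ hi (t - 1)) ∧
  lo J.T ≤ d ∧ d ≤ hi J.T

/-- An ordering policy: its action lies in `[0, V_t]` whenever the input interval has
length at most `Δ_t`.  The first two real arguments are the endpoints of the interval,
the third is the current inventory level. -/
def IsPolicy (π : ℕ → ℝ → ℝ → ℝ → ℝ) : Prop :=
  ∀ t a b x, 1 ≤ t → t ≤ J.T → a ≤ b → b - a ≤ J.Δ t →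
    0 ≤ π t a b x ∧ π t a b x ≤ J.Vcap t

/-- The inventory levels produced by a decision rule `π` along a prediction sequence:
`x_1 = 0` and `x_{t+1} = x_t + π_t([lo_t, hi_t], x_t)`. -/
noncomputable def inv (π : ℕ → ℝ → ℝ → ℝ → ℝ) (lo hi : ℕ → ℝ) : ℕ → ℝ
  | 0 => 0
  | t + 1 => if t = 0 then 0 else inv π lo hi t + π t (lo t) (hi t) (inv π lo hi t)

/-- The total supply capacity `V_1 + … + V_T`. -/
noncomputable def totalCap : ℝ := ∑ t ∈ Finset.Icc 1 J.T, J.Vcap t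

/-- The profit of a policy on a given scenario. -/
noncomputable def profit (π : ℕ → ℝ → ℝ → ℝ → ℝ) (lo hi : ℕ → ℝ) (d : ℝ) : ℝ :=
  J.p * min d (inv π lo hi (J.T + 1)) - J.c * inv π lo hi (J.T + 1)

/-- The hindsight-optimal profit. -/
noncomputable def hindsight (d : ℝ) : ℝ := (J.p - J.c) * min J.totalCap d

/-- The robust regret of a policy: the supremum over admissible scenarios of the difference
between the hindsight-optimal profit and the policy's profit. -/
noncomputable def regret (π : ℕ → ℝ → ℝ → ℝ → ℝ) : ℝ :=
  sSup {r | ∃ lo hi d, J.Scenario lo hi d ∧ r = J.hindsight d - J.profit π lo hi d}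

/-- The robust competitive ratio of a policy: the infimum over admissible scenarios of the
ratio between the policy's profit and the hindsight-optimal profit. -/
noncomputable def ratio (π : ℕ → ℝ → ℝ → ℝ → ℝ) : ℝ :=
  sInf {r | ∃ lo hi d, J.Scenario lo hi d ∧ r = J.profit π lo hi d / J.hindsight d}

end RMOwP

namespace RMOwP

/-- `Φ* = min_{t ∈ {1,…,T}} (p·d̲₀ + c·Σ_{s=t+1}^{T} V_s)/(p·d̲₀ + c·Δ_t)`. -/
noncomputable def PhiStar (J : RMOwP) : ℝ :=
  sInf ((fun t => (J.p * J.dlo + J.c * ∑ s ∈ Finset.Icc (t + 1) J.T, J.Vcap s) /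
    (J.p * J.dlo + J.c * J.Δ t)) '' Set.Icc 1 J.T)

end RMOwP
namespace RMOwP

variable {J : RMOwP}

lemma inv_one (π : ℕ → ℝ → ℝ → ℝ → ℝ) (lo hi : ℕ → ℝ) : inv π lo hi 1 = 0 := by
  simp [inv]

lemma inv_succ (π : ℕ → ℝ → ℝ → ℝ → ℝ) (lo hi : ℕ → ℝ) {t : ℕ} (ht : t ≠ 0) :
    inv π lo hi (t + 1) = inv π lo hi t + π t (lo t) (hi t) (inv π lo hi t) := by
  simp [inv, ht]

/-- The inventory only depends on the prediction intervals at earlier times. -/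
lemma inv_congr (π : ℕ → ℝ → ℝ → ℝ → ℝ) (lo hi lo' hi' : ℕ → ℝ) :
    ∀ s : ℕ, (∀ u, 1 ≤ u → u < s → lo u = lo' u ∧ hi u = hi' u) →
      inv π lo hi s = inv π lo' hi' s
  | 0, _ => rfl
  | 1, _ => by rw [inv_one, inv_one]
  | (s + 2), h => by
    have ih := inv_congr π lo hi lo' hi' (s + 1)
      (fun u hu1 hu2 => h u hu1 (Nat.lt_succ_of_lt hu2))
    have hs : s + 1 ≠ 0 := Nat.succ_ne_zero s
    rw [inv_succ π lo hi hs, inv_succ π lo' hi' hs, ih,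
      (h (s+1) (Nat.le_add_left 1 s) (Nat.lt_succ_self _)).1,
      (h (s+1) (Nat.le_add_left 1 s) (Nat.lt_succ_self _)).2]

/-- Δ is non-increasing on `[1, T]`. -/
lemma delta_anti (hJ : J.IsValid) {s t : ℕ} (hs : 1 ≤ s) (hst : s ≤ t) (ht : t ≤ J.T) :
    J.Δ t ≤ J.Δ s := by
  induction t, hst using Nat.le_induction with
  | base => exact le_refl _
  | succ n hn ih =>
    exact le_trans (hJ.2.2.2.1 n (le_trans hs hn) ht) (ih (le_trans (Nat.le_succ n) ht))

/-- Prediction intervals are nested. -/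
lemma scen_mono {lo hi : ℕ → ℝ} {d : ℝ} (hsc : J.Scenario lo hi d)
    {s t : ℕ} (hs : 1 ≤ s) (hst : s ≤ t) (ht : t ≤ J.T) :
    lo s ≤ lo t ∧ hi t ≤ hi s := by
  induction t, hst using Nat.le_induction with
  | base => exact ⟨le_refl _, le_refl _⟩
  | succ n hn ih =>
    have ih' := ih (le_trans (Nat.le_succ n) ht)
    have h2 : 2 ≤ n + 1 := by omega
    have := hsc.2.2.2.1 (n + 1) h2 ht
    simp only [Nat.add_sub_cancel] at this
    exact ⟨le_trans ih'.1 this.1, le_trans this.2 ih'.2⟩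

end RMOwP
namespace RMOwP

/-- Along an admissible scenario, a policy's order at each step `t ∈ [1,T]` lies in `[0, V_t]`. -/
lemma order_bounds {J : RMOwP} {π : ℕ → ℝ → ℝ → ℝ → ℝ} (hπ : J.IsPolicy π)
    {lo hi : ℕ → ℝ} {d : ℝ} (hsc : J.Scenario lo hi d) {t : ℕ} (ht1 : 1 ≤ t) (ht2 : t ≤ J.T)
    (x : ℝ) : 0 ≤ π t (lo t) (hi t) x ∧ π t (lo t) (hi t) x ≤ J.Vcap t := by
  have h := hsc.2.2.1 t ht1 ht2
  exact hπ t (lo t) (hi t) x ht1 ht2 h.1 h.2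

/-- Inventory is nondecreasing and increments are capacity-bounded. -/
lemma inv_bounds {J : RMOwP} {π : ℕ → ℝ → ℝ → ℝ → ℝ} (hπ : J.IsPolicy π)
    {lo hi : ℕ → ℝ} {d : ℝ} (hsc : J.Scenario lo hi d) (s : ℕ) (hs : 1 ≤ s) :
    ∀ n : ℕ, s + n ≤ J.T + 1 →
      inv π lo hi s ≤ inv π lo hi (s + n) ∧
      inv π lo hi (s + n) ≤ inv π lo hi s + ∑ u ∈ Finset.Ico s (s + n), J.Vcap u := by
  intro n
  induction n with
  | zero => intro _; simp
  | succ n ih =>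
    intro hn
    have hn' : s + n ≤ J.T + 1 := by omega
    have ih' := ih hn'
    have hsn1 : 1 ≤ s + n := by omega
    have hsn2 : s + n ≤ J.T := by omega
    have hne : s + n ≠ 0 := by omega
    have hstep := order_bounds hπ hsc hsn1 hsn2 (inv π lo hi (s + n))
    have heq : inv π lo hi (s + n + 1)
        = inv π lo hi (s + n) + π (s + n) (lo (s+n)) (hi (s+n)) (inv π lo hi (s + n)) :=
      inv_succ π lo hi hne
    constructor
    · have : s + (n + 1) = s + n + 1 := by omega
      rw [this, heq]; linarith [ih'.1]
    · have h1 : s + (n + 1) = s + n + 1 := by omega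
      rw [h1, heq, Finset.sum_Ico_succ_top (by omega : s ≤ s + n)]
      linarith [ih'.2]

/-- Inventory is nonnegative. -/
lemma inv_nonneg {J : RMOwP} {π : ℕ → ℝ → ℝ → ℝ → ℝ} (hπ : J.IsPolicy π)
    {lo hi : ℕ → ℝ} {d : ℝ} (hsc : J.Scenario lo hi d) {t : ℕ} (ht : t ≤ J.T + 1) :
    0 ≤ inv π lo hi t := by
  rcases Nat.eq_zero_or_pos t with h | h
  · simp [h, inv]
  · have := (inv_bounds hπ hsc 1 le_rfl (t - 1) (by omega)).1
    rw [inv_one] at this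
    have h1 : 1 + (t - 1) = t := by omega
    rwa [h1] at this

/-- The final inventory is at most the total capacity. -/
lemma inv_le_totalCap {J : RMOwP} {π : ℕ → ℝ → ℝ → ℝ → ℝ} (hπ : J.IsPolicy π)
    {lo hi : ℕ → ℝ} {d : ℝ} (hsc : J.Scenario lo hi d) :
    inv π lo hi (J.T + 1) ≤ J.totalCap := by
  have := (inv_bounds hπ hsc 1 le_rfl J.T (by omega)).2
  rw [inv_one] at this
  have h1 : 1 + J.T = J.T + 1 := by omega
  rw [h1] at this
  rw [totalCap, ← Finset.Ico_add_one_right_eq_Icc]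
  linarith

end RMOwP
namespace RMOwP

/-- The candidate ratio at time `t`. -/
noncomputable def fratio (J : RMOwP) (t : ℕ) : ℝ :=
  (J.p * J.dlo + J.c * ∑ s ∈ Finset.Icc (t + 1) J.T, J.Vcap s) /
    (J.p * J.dlo + J.c * J.Δ t)

variable {J : RMOwP}

lemma sumV_nonneg (hJ : J.IsValid) (t : ℕ) :
    0 ≤ ∑ s ∈ Finset.Icc (t + 1) J.T, J.Vcap s :=
  Finset.sum_nonneg fun s hs => by
    rw [Finset.mem_Icc] at hs
    exact hJ.2.2.2.2.2.2.2.2 s (by omega) hs.2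

lemma totalCap_nonneg (hJ : J.IsValid) : 0 ≤ J.totalCap :=
  Finset.sum_nonneg fun s hs => by
    rw [Finset.mem_Icc] at hs
    exact hJ.2.2.2.2.2.2.2.2 s hs.1 hs.2

lemma denom_pos (hJ : J.IsValid) (hdlo : 0 < J.dlo) {t : ℕ} (ht1 : 1 ≤ t) (ht2 : t ≤ J.T) :
    0 < J.p * J.dlo + J.c * J.Δ t := by
  have hc := hJ.2.2.2.2.2.2.1
  have hp : 0 < J.p := lt_trans hc hJ.2.2.2.2.2.2.2.1
  have hΔ := hJ.2.2.2.2.1 t ht1 ht2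
  nlinarith

lemma fratio_pos (hJ : J.IsValid) (hdlo : 0 < J.dlo) {t : ℕ} (ht1 : 1 ≤ t) (ht2 : t ≤ J.T) :
    0 < J.fratio t := by
  have hc := hJ.2.2.2.2.2.2.1
  have hp : 0 < J.p := lt_trans hc hJ.2.2.2.2.2.2.2.1
  have hs := sumV_nonneg hJ t
  exact div_pos (by nlinarith) (denom_pos hJ hdlo ht1 ht2)

lemma phiStar_spec (hJ : J.IsValid) :
    (∃ t, 1 ≤ t ∧ t ≤ J.T ∧ J.PhiStar = J.fratio t) ∧
    (∀ t, 1 ≤ t → t ≤ J.T → J.PhiStar ≤ J.fratio t) := by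
  have hT := hJ.1
  set S : Set ℝ := (fun t => (J.p * J.dlo + J.c * ∑ s ∈ Finset.Icc (t + 1) J.T, J.Vcap s) /
    (J.p * J.dlo + J.c * J.Δ t)) '' Set.Icc 1 J.T with hS
  have hfin : S.Finite := (Set.finite_Icc 1 J.T).image _
  have hne : S.Nonempty := ⟨_, ⟨1, Set.mem_Icc.mpr ⟨le_rfl, hT⟩, rfl⟩⟩
  have hmem : sInf S ∈ S := hne.csInf_mem hfin
  constructor
  · obtain ⟨t, ht, heq⟩ := hmem
    rw [Set.mem_Icc] at ht
    exact ⟨t, ht.1, ht.2, heq.symm⟩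
  · intro t ht1 ht2
    exact csInf_le hfin.bddBelow ⟨t, Set.mem_Icc.mpr ⟨ht1, ht2⟩, rfl⟩

lemma phiStar_le_one (hJ : J.IsValid) (hdlo : 0 < J.dlo) : J.PhiStar ≤ 1 := by
  have hc := hJ.2.2.2.2.2.2.1
  have hΔ := hJ.2.2.2.2.1 J.T hJ.1 le_rfl
  have h := (phiStar_spec hJ).2 J.T hJ.1 le_rfl
  have hT : Finset.Icc (J.T + 1) J.T = ∅ := by
    rw [Finset.Icc_eq_empty_iff]; omega
  rw [fratio, hT] at h
  simp at h
  refine le_trans h ?_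
  rw [div_le_one (denom_pos hJ hdlo hJ.1 le_rfl)]
  nlinarith

lemma phiStar_pos (hJ : J.IsValid) (hdlo : 0 < J.dlo) : 0 < J.PhiStar := by
  obtain ⟨t, ht1, ht2, heq⟩ := (phiStar_spec hJ).1
  rw [heq]
  exact fratio_pos hJ hdlo ht1 ht2

end RMOwP
namespace RMOwP

/-- The explicit order-up-to policy. -/
noncomputable def pistar (J : RMOwP) : ℕ → ℝ → ℝ → ℝ → ℝ :=
  fun t a _ x =>
    max 0 (min (J.Vcap t) (a * (((1 - J.PhiStar) * J.p + J.PhiStar * J.c) / J.c) - x))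

variable {J : RMOwP}

lemma clamp_le (x V L : ℝ) : x + max 0 (min V (L - x)) ≤ max x L := by
  have h1 : min V (L - x) ≤ L - x := min_le_right _ _
  have h2 : max 0 (min V (L - x)) ≤ max 0 (L - x) :=
    max_le (le_max_left _ _) (le_trans h1 (le_max_right _ _))
  have h3 : x + max 0 (L - x) = max x L := by
    rcases le_total (L - x) 0 with h | h
    · rw [max_eq_left h, max_eq_left (by linarith : L ≤ x), add_zero]
    · rw [max_eq_right h, max_eq_right (by linarith : x ≤ L)]; ring
  linarith

lemma clamp_ge (x V L : ℝ) : min (x + V) L ≤ x + max 0 (min V (L - x)) := by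
  rcases le_total V (L - x) with h | h
  · rw [min_eq_left h]
    have : min (x + V) L ≤ x + V := min_le_left _ _
    have h2 : V ≤ max 0 V := le_max_right _ _
    linarith
  · rw [min_eq_right h]
    have : min (x + V) L ≤ L := min_le_right _ _
    have h2 : L - x ≤ max 0 (L - x) := le_max_right _ _
    linarith

lemma pistar_isPolicy (hJ : J.IsValid) : J.IsPolicy (pistar J) := by
  intro t a b x ht1 ht2 _ _
  refine ⟨le_max_left _ _, max_le (hJ.2.2.2.2.2.2.2.2 t ht1 ht2) (min_le_left _ _)⟩

lemma lower_bound (hJ : J.IsValid) (hdlo : 0 < J.dlo) (hcap : J.dhi ≤ J.totalCap)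
    {lo hi : ℕ → ℝ} {d : ℝ} (hsc : J.Scenario lo hi d) :
    J.PhiStar * J.hindsight d ≤ J.profit (pistar J) lo hi d := by
  have hc : 0 < J.c := hJ.2.2.2.2.2.2.1
  have hpc : J.c < J.p := hJ.2.2.2.2.2.2.2.1
  have hp : 0 < J.p := lt_trans hc hpc
  set Φ := J.PhiStar with hΦdef
  have hΦ1 : Φ ≤ 1 := phiStar_le_one hJ hdlo
  have hΦ0 : 0 < Φ := phiStar_pos hJ hdlo
  set B : ℝ := ((1 - Φ) * J.p + Φ * J.c) / J.c with hBdef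
  have hcB : J.c * B = (1 - Φ) * J.p + Φ * J.c := by
    rw [hBdef]; field_simp
  have hB1 : 1 ≤ B := by
    rw [hBdef, le_div_iff₀ hc]; nlinarith
  have hB0 : 0 ≤ B := le_trans zero_le_one hB1
  have hpis : ∀ n (a b X : ℝ), pistar J n a b X = max 0 (min (J.Vcap n) (a * B - X)) :=
    fun _ _ _ _ => rfl
  clear_value B
  clear_value Φ
  have hT := hJ.1
  have hsm1T := scen_mono hsc le_rfl hT le_rfl  -- lo 1 ≤ lo T, hi T ≤ hi 1
  have hd_lo : J.dlo ≤ d := le_trans hsc.1 (le_trans hsm1T.1 hsc.2.2.2.2.1)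
  have hd_hi : d ≤ J.dhi := le_trans hsc.2.2.2.2.2 (le_trans hsm1T.2 hsc.2.1)
  have hd_cap : d ≤ J.totalCap := le_trans hd_hi hcap
  have hd0 : 0 < d := lt_of_lt_of_le hdlo hd_lo
  have hloT : J.dlo ≤ lo J.T := le_trans hsc.1 hsm1T.1
  have hhind : J.hindsight d = (J.p - J.c) * d := by
    rw [hindsight, min_eq_right hd_cap]
  set x : ℝ := inv (pistar J) lo hi (J.T + 1) with hxdef
  -- upper bound on inventory
  have hub : ∀ n, n ≤ J.T → inv (pistar J) lo hi (n + 1) ≤ lo J.T * B := by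
    intro n
    induction n with
    | zero =>
      intro _
      rw [inv_one]
      exact mul_nonneg (le_trans hdlo.le hloT) hB0
    | succ n ih =>
      intro hn
      have hn' : n ≤ J.T := by omega
      have hne : n + 1 ≠ 0 := Nat.succ_ne_zero n
      rw [inv_succ _ lo hi hne, hpis]
      have h1 := clamp_le (inv (pistar J) lo hi (n + 1)) (J.Vcap (n + 1)) (lo (n + 1) * B)
      have h2 : lo (n + 1) ≤ lo J.T := (scen_mono hsc (by omega) hn le_rfl).1
      have h3 : lo (n + 1) * B ≤ lo J.T * B := mul_le_mul_of_nonneg_right h2 hB0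
      have h4 : max (inv (pistar J) lo hi (n + 1)) (lo (n + 1) * B) ≤ lo J.T * B :=
        max_le (ih hn') h3
      exact le_trans h1 h4
  have hxub : x ≤ lo J.T * B := hub J.T le_rfl
  -- lower bound structure on inventory
  have hkey : ∀ n, n ≤ J.T → ∃ t, t ≤ n ∧
      (if t = 0 then 0 else lo t * B) + ∑ u ∈ Finset.Ico (t + 1) (n + 1), J.Vcap u
        ≤ inv (pistar J) lo hi (n + 1) := by
    intro n
    induction n with
    | zero =>
      intro _
      exact ⟨0, le_rfl, by simp [inv_one]⟩
    | succ n ih =>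
      intro hn
      have hn' : n ≤ J.T := by omega
      obtain ⟨t, ht, hx⟩ := ih hn'
      have hne : n + 1 ≠ 0 := Nat.succ_ne_zero n
      have hstep := clamp_ge (inv (pistar J) lo hi (n + 1)) (J.Vcap (n + 1)) (lo (n + 1) * B)
      rw [inv_succ _ lo hi hne, hpis]
      rcases le_total (lo (n + 1) * B) (inv (pistar J) lo hi (n + 1) + J.Vcap (n + 1)) with h | h
      · refine ⟨n + 1, le_rfl, ?_⟩
        simp only [Nat.succ_ne_zero, if_false]
        rw [Finset.Ico_self, Finset.sum_empty, add_zero]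
        rw [min_eq_right h] at hstep
        exact hstep
      · refine ⟨t, by omega, ?_⟩
        rw [min_eq_left (by linarith)] at hstep
        rw [Finset.sum_Ico_succ_top (by omega : t + 1 ≤ n + 1)]
        linarith
  have hkey' : ∃ t, t ≤ J.T ∧
      (if t = 0 then 0 else lo t * B) + ∑ u ∈ Finset.Ico (t + 1) (J.T + 1), J.Vcap u ≤ x := by
    rw [hxdef]; exact hkey J.T le_rfl
  have hprofit : J.profit (pistar J) lo hi d = J.p * min d x - J.c * x := by
    rw [profit, hxdef]
  clear_value x
  clear hkey hub hxdef
  -- case split on min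
  rw [hprofit, hhind]
  rcases le_total d x with hdx | hxd
  · rw [min_eq_left hdx]
    have hloTd : lo J.T ≤ d := hsc.2.2.2.2.1
    have hxdB : x ≤ d * B := le_trans hxub (mul_le_mul_of_nonneg_right hloTd hB0)
    have hcx : J.c * x ≤ J.c * (d * B) := mul_le_mul_of_nonneg_left hxdB hc.le
    nlinarith [hcx, hcB]
  · rw [min_eq_right hxd]
    -- show Φ * d ≤ x
    have hΦd : Φ * d ≤ x := by
      obtain ⟨t, ht, hx⟩ := hkey'
      rcases Nat.eq_zero_or_pos t with h0 | h1
      · subst h0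
        rw [if_pos rfl, zero_add, Finset.Ico_add_one_right_eq_Icc] at hx
        have hto : J.totalCap ≤ x := by rw [totalCap]; exact hx
        nlinarith
      · have ht1 : 1 ≤ t := h1
        rw [if_neg (by omega : ¬ t = 0)] at hx
        rw [Finset.Ico_add_one_right_eq_Icc] at hx
        set W : ℝ := ∑ u ∈ Finset.Icc (t + 1) J.T, J.Vcap u with hWdef
        have hfr : Φ ≤ J.fratio t := by
          rw [hΦdef]; exact (phiStar_spec hJ).2 t ht1 ht
        have hfr' : Φ * (J.p * J.dlo + J.c * J.Δ t) ≤ J.p * J.dlo + J.c * W := by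
          rw [fratio] at hfr
          rw [← hWdef] at hfr
          exact (le_div_iff₀ (denom_pos hJ hdlo ht1 ht)).mp hfr
        have hdt : d ≤ lo t + J.Δ t := by
          have h1 := (scen_mono hsc ht1 ht le_rfl).2
          have h2 := (hsc.2.2.1 t ht1 ht).2
          have h3 := hsc.2.2.2.2.2
          linarith
        have hlot : J.dlo ≤ lo t := le_trans hsc.1 (scen_mono hsc le_rfl ht1 ht).1
        have hmid : Φ * (lo t + J.Δ t) ≤ lo t * B + W := by
          have hcgoal : J.c * (Φ * (lo t + J.Δ t)) ≤ J.c * (lo t * B + W) := by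
            have hexp : J.c * (lo t * B) = lo t * ((1 - Φ) * J.p + Φ * J.c) := by
              rw [mul_left_comm, hcB]
            nlinarith [mul_nonneg (mul_nonneg (sub_nonneg.mpr hΦ1)
              (sub_nonneg.mpr hlot)) hp.le]
          exact le_of_mul_le_mul_left hcgoal hc
        have hfin : lo t * B + W ≤ x := hx
        calc Φ * d ≤ Φ * (lo t + J.Δ t) := mul_le_mul_of_nonneg_left hdt hΦ0.le
          _ ≤ lo t * B + W := hmid
          _ ≤ x := hfin
    have hmul := mul_le_mul_of_nonneg_left hΦd (by linarith : (0:ℝ) ≤ J.p - J.c)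
    nlinarith [hmul]

end RMOwP
namespace RMOwP

variable {J : RMOwP}

lemma scen_d_bounds (hJ : J.IsValid) {lo hi : ℕ → ℝ} {d : ℝ} (hsc : J.Scenario lo hi d) :
    J.dlo ≤ d ∧ d ≤ J.dhi := by
  have hsm := scen_mono hsc le_rfl hJ.1 le_rfl
  exact ⟨le_trans hsc.1 (le_trans hsm.1 hsc.2.2.2.2.1),
    le_trans hsc.2.2.2.2.2 (le_trans hsm.2 hsc.2.1)⟩

lemma hindsight_eq (hJ : J.IsValid) (hcap : J.dhi ≤ J.totalCap)
    {lo hi : ℕ → ℝ} {d : ℝ} (hsc : J.Scenario lo hi d) :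
    J.hindsight d = (J.p - J.c) * d := by
  rw [hindsight, min_eq_right (le_trans (scen_d_bounds hJ hsc).2 hcap)]

lemma hindsight_pos (hJ : J.IsValid) (hdlo : 0 < J.dlo) (hcap : J.dhi ≤ J.totalCap)
    {lo hi : ℕ → ℝ} {d : ℝ} (hsc : J.Scenario lo hi d) : 0 < J.hindsight d := by
  rw [hindsight_eq hJ hcap hsc]
  have := (scen_d_bounds hJ hsc).1
  have := hJ.2.2.2.2.2.2.2.1
  nlinarith

lemma trivial_scenario (hJ : J.IsValid) :
    J.Scenario (fun _ => J.dlo) (fun _ => J.dlo) J.dlo :=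
  ⟨le_rfl, hJ.2.2.1, fun t ht1 ht2 => ⟨le_rfl, by simpa using hJ.2.2.2.2.1 t ht1 ht2⟩,
    fun _ _ _ => ⟨le_rfl, le_rfl⟩, le_rfl, le_rfl⟩

lemma phiStar_le_ratio_pistar (hJ : J.IsValid) (hdlo : 0 < J.dlo)
    (hcap : J.dhi ≤ J.totalCap) : J.PhiStar ≤ J.ratio (pistar J) := by
  rw [ratio]
  apply le_csInf
  · exact ⟨_, _, _, J.dlo, trivial_scenario hJ, rfl⟩
  · rintro r ⟨lo, hi, d, hsc, rfl⟩
    have hlow := lower_bound hJ hdlo hcap hsc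
    have hhpos := hindsight_pos hJ hdlo hcap hsc
    rw [le_div_iff₀ hhpos]
    linarith

end RMOwP
namespace RMOwP

variable {J : RMOwP}

lemma ratio_bddBelow (hJ : J.IsValid) (hdlo : 0 < J.dlo) (hcap : J.dhi ≤ J.totalCap)
    {π : ℕ → ℝ → ℝ → ℝ → ℝ} (hπ : J.IsPolicy π) :
    BddBelow {r | ∃ lo hi d, J.Scenario lo hi d ∧ r = J.profit π lo hi d / J.hindsight d} := by
  have hc : 0 < J.c := hJ.2.2.2.2.2.2.1
  have hpc : J.c < J.p := hJ.2.2.2.2.2.2.2.1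
  have htc : 0 ≤ J.totalCap := totalCap_nonneg hJ
  refine ⟨-(J.c * J.totalCap) / ((J.p - J.c) * J.dlo), ?_⟩
  rintro r ⟨lo, hi, d, hsc, rfl⟩
  have hx0 : 0 ≤ inv π lo hi (J.T + 1) := inv_nonneg hπ hsc le_rfl
  have hxcap : inv π lo hi (J.T + 1) ≤ J.totalCap := inv_le_totalCap hπ hsc
  have hd : J.dlo ≤ d := (scen_d_bounds hJ hsc).1
  have hd0 : 0 < d := lt_of_lt_of_le hdlo hd
  have hmin : 0 ≤ min d (inv π lo hi (J.T + 1)) := le_min hd0.le hx0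
  have hprofit : -(J.c * J.totalCap) ≤ J.profit π lo hi d := by
    rw [profit]
    have h1 : 0 ≤ J.p * min d (inv π lo hi (J.T + 1)) :=
      mul_nonneg (by linarith) hmin
    nlinarith
  have hhge : (J.p - J.c) * J.dlo ≤ J.hindsight d := by
    rw [hindsight_eq hJ hcap hsc]
    nlinarith
  have hh0 : 0 < (J.p - J.c) * J.dlo := by nlinarith
  have hhpos : 0 < J.hindsight d := lt_of_lt_of_le hh0 hhge
  rw [div_le_div_iff₀ hh0 hhpos]
  have hm : -(J.c * J.totalCap) ≤ 0 := by nlinarith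
  nlinarith [mul_le_mul_of_nonpos_left hhge hm,
    mul_le_mul_of_nonneg_right hprofit hh0.le]

/-- Adversarial scenario with high demand. -/
noncomputable def advLoA (J : RMOwP) (τ : ℕ) : ℕ → ℝ :=
  fun s => if s ≤ τ then J.dlo else J.dlo + J.Δ τ

noncomputable def advHiA (J : RMOwP) (τ : ℕ) : ℕ → ℝ :=
  fun s => if s ≤ τ then J.dlo + J.Δ s else J.dlo + J.Δ τ

/-- Adversarial scenario with low demand. -/
noncomputable def advHiB (J : RMOwP) (τ : ℕ) : ℕ → ℝ :=
  fun s => if s ≤ τ then J.dlo + J.Δ s else J.dlo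

lemma advA_scenario (hJ : J.IsValid) {τ : ℕ} (hτ1 : 1 ≤ τ) (hτ2 : τ ≤ J.T) :
    J.Scenario (advLoA J τ) (advHiA J τ) (J.dlo + J.Δ τ) := by
  have hΔτ : 0 ≤ J.Δ τ := hJ.2.2.2.2.1 τ hτ1 hτ2
  have hΔ1 : J.Δ 1 ≤ J.dhi - J.dlo := hJ.2.2.2.2.2.1
  have hΔτ1 : J.Δ τ ≤ J.Δ 1 := delta_anti hJ le_rfl hτ1 hτ2
  refine ⟨?_, ?_, ?_, ?_, ?_, ?_⟩
  · simp [advLoA, hτ1]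
  · simp only [advHiA, if_pos hτ1]; linarith
  · intro t ht1 ht2
    have hΔt : 0 ≤ J.Δ t := hJ.2.2.2.2.1 t ht1 ht2
    by_cases h : t ≤ τ <;> simp only [advLoA, advHiA, h, if_true, if_false] <;>
      constructor <;> linarith
  · intro t ht2 htT
    by_cases h1 : t ≤ τ
    · have h2 : t - 1 ≤ τ := by omega
      have h4 : J.Δ t ≤ J.Δ (t - 1) := delta_anti hJ (by omega) (by omega : t - 1 ≤ t) htT
      simp only [advLoA, advHiA, h1, h2, if_true]
      constructor <;> linarith
    · by_cases h2 : t - 1 ≤ τ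
      · have h5 : t - 1 = τ := by omega
        simp only [advLoA, advHiA, h1, if_false, h5, le_refl, if_true, and_true]
        linarith
      · simp only [advLoA, advHiA, h1, h2, if_false]
        constructor <;> linarith
  · by_cases h : J.T ≤ τ
    · simp only [advLoA, h, if_true]
      linarith
    · simp only [advLoA, h, if_false]
      exact le_rfl
  · by_cases h : J.T ≤ τ
    · have h5 : τ = J.T := by omega
      simp only [advHiA, h, if_true, h5, le_refl]
    · simp only [advHiA, h, if_false]
      exact le_rfl

lemma advB_scenario (hJ : J.IsValid) {τ : ℕ} (hτ1 : 1 ≤ τ) (hτ2 : τ ≤ J.T) :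
    J.Scenario (fun _ => J.dlo) (advHiB J τ) J.dlo := by
  have hΔ1 : J.Δ 1 ≤ J.dhi - J.dlo := hJ.2.2.2.2.2.1
  refine ⟨le_rfl, ?_, ?_, ?_, le_rfl, ?_⟩
  · simp only [advHiB, if_pos hτ1]; linarith
  · intro t ht1 ht2
    have hΔt : 0 ≤ J.Δ t := hJ.2.2.2.2.1 t ht1 ht2
    by_cases h : t ≤ τ <;> simp only [advHiB, h, if_true, if_false] <;>
      constructor <;> linarith
  · intro t ht2 htT
    refine ⟨le_rfl, ?_⟩
    by_cases h1 : t ≤ τ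
    · have h2 : t - 1 ≤ τ := by omega
      have h4 : J.Δ t ≤ J.Δ (t - 1) := delta_anti hJ (by omega) (by omega : t - 1 ≤ t) htT
      simp only [advHiB, h1, h2, if_true]
      linarith
    · by_cases h2 : t - 1 ≤ τ
      · have hΔt1 : 0 ≤ J.Δ (t - 1) := hJ.2.2.2.2.1 (t - 1) (by omega) (by omega)
        simp only [advHiB, h1, h2, if_true, if_false]
        linarith
      · simp only [advHiB, h1, h2, if_false]
        exact le_rfl
  · by_cases h : J.T ≤ τ
    · have hΔT : 0 ≤ J.Δ J.T := hJ.2.2.2.2.1 J.T hJ.1 le_rfl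
      simp only [advHiB, h, if_true]
      linarith
    · simp only [advHiB, h, if_false]
      exact le_rfl

lemma ratio_le_phiStar (hJ : J.IsValid) (hdlo : 0 < J.dlo) (hcap : J.dhi ≤ J.totalCap)
    {π : ℕ → ℝ → ℝ → ℝ → ℝ} (hπ : J.IsPolicy π) :
    J.ratio π ≤ J.PhiStar := by
  have hc : 0 < J.c := hJ.2.2.2.2.2.2.1
  have hpc : J.c < J.p := hJ.2.2.2.2.2.2.2.1
  have hp : 0 < J.p := lt_trans hc hpc
  have hT := hJ.1
  obtain ⟨τ, hτ1, hτ2, heq⟩ := (phiStar_spec hJ).1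
  set Φ := J.PhiStar with hΦdef
  have hΔτ : 0 ≤ J.Δ τ := hJ.2.2.2.2.1 τ hτ1 hτ2
  set W : ℝ := ∑ u ∈ Finset.Icc (τ + 1) J.T, J.Vcap u with hWdef
  have hΦeq : Φ * (J.p * J.dlo + J.c * J.Δ τ) = J.p * J.dlo + J.c * W := by
    rw [heq, fratio, ← hWdef, div_mul_cancel₀]
    exact ne_of_gt (denom_pos hJ hdlo hτ1 hτ2)
  have hscA := advA_scenario hJ hτ1 hτ2
  have hscB := advB_scenario hJ hτ1 hτ2
  set dA : ℝ := J.dlo + J.Δ τ with hdA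
  set y : ℝ := inv π (fun _ => J.dlo) (advHiB J τ) (τ + 1) with hydef
  have hyA : inv π (advLoA J τ) (advHiA J τ) (τ + 1) = y := by
    rw [hydef]
    apply inv_congr
    intro u hu1 hu2
    have hu : u ≤ τ := by omega
    constructor <;> simp [advLoA, advHiA, advHiB, hu]
  have hidx : τ + 1 + (J.T - τ) = J.T + 1 := by omega
  have hyB : y ≤ inv π (fun _ => J.dlo) (advHiB J τ) (J.T + 1) := by
    have := (inv_bounds hπ hscB (τ + 1) (by omega) (J.T - τ) (by omega)).1
    rwa [hidx] at this
  have hxA : inv π (advLoA J τ) (advHiA J τ) (J.T + 1) ≤ y + W := by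
    have h := (inv_bounds hπ hscA (τ + 1) (by omega) (J.T - τ) (by omega)).2
    rw [hidx, hyA, Finset.Ico_add_one_right_eq_Icc, ← hWdef] at h
    exact h
  have hbdd := ratio_bddBelow hJ hdlo hcap hπ
  rcases le_total (J.dlo * ((1 - Φ) * J.p + Φ * J.c)) (J.c * y) with hcase | hcase
  · -- use scenario B
    have hle := csInf_le hbdd ⟨_, _, _, hscB, rfl⟩
    rw [ratio]
    refine le_trans hle ?_
    have hhind : J.hindsight J.dlo = (J.p - J.c) * J.dlo := hindsight_eq hJ hcap hscB
    have hhpos : 0 < J.hindsight J.dlo := hindsight_pos hJ hdlo hcap hscB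
    rw [div_le_iff₀ hhpos, hhind, profit]
    have h1 : min J.dlo (inv π (fun _ => J.dlo) (advHiB J τ) (J.T + 1)) ≤ J.dlo :=
      min_le_left _ _
    have h2 : J.p * min J.dlo (inv π (fun _ => J.dlo) (advHiB J τ) (J.T + 1)) ≤ J.p * J.dlo :=
      mul_le_mul_of_nonneg_left h1 hp.le
    have h3 : J.c * y ≤ J.c * inv π (fun _ => J.dlo) (advHiB J τ) (J.T + 1) :=
      mul_le_mul_of_nonneg_left hyB hc.le
    nlinarith
  · -- use scenario A
    have hle := csInf_le hbdd ⟨_, _, _, hscA, rfl⟩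
    rw [ratio]
    refine le_trans hle ?_
    have hhind : J.hindsight dA = (J.p - J.c) * dA := hindsight_eq hJ hcap hscA
    have hhpos : 0 < J.hindsight dA := hindsight_pos hJ hdlo hcap hscA
    rw [div_le_iff₀ hhpos, hhind, profit]
    have hmin1 : min dA (inv π (advLoA J τ) (advHiA J τ) (J.T + 1)) ≤ y + W :=
      le_trans (min_le_right _ _) hxA
    have ha : J.c * min dA (inv π (advLoA J τ) (advHiA J τ) (J.T + 1)) ≤
        J.c * inv π (advLoA J τ) (advHiA J τ) (J.T + 1) :=
      mul_le_mul_of_nonneg_left (min_le_right _ _) hc.le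
    have hb : (J.p - J.c) * min dA (inv π (advLoA J τ) (advHiA J τ) (J.T + 1)) ≤
        (J.p - J.c) * (y + W) :=
      mul_le_mul_of_nonneg_left hmin1 (by linarith)
    have hyW : J.c * (y + W) ≤ J.c * (Φ * (J.dlo + J.Δ τ)) := by nlinarith
    have hyW' : y + W ≤ Φ * (J.dlo + J.Δ τ) := le_of_mul_le_mul_left hyW hc
    have hfinal : (J.p - J.c) * (y + W) ≤ Φ * ((J.p - J.c) * dA) := by
      rw [hdA]
      nlinarith
    linarith

end RMOwP

/-- **Proposition (Optimal robust competitive ratio for RMOwP).** Assume `d̲₀ > 0` and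
`d̄₀ ≤ V_1 + … + V_T`.  Then (i) for every `Φ ≤ 1` an ordering policy with robust competitive
ratio at least `Φ` exists iff `Φ ≤ Φ*`, and (ii) the explicit policy
`π*_t([a,b],x) = max(0, min(V_t, a·((1−Φ*)·p + Φ*·c)/c − x))` is an ordering policy whose
robust competitive ratio equals `Φ*`. -/
theorem rmowp_optimal_ratio (J : RMOwP) (hJ : J.IsValid)
    (hdlo : 0 < J.dlo) (hcap : J.dhi ≤ J.totalCap) :
    (∀ Φ : ℝ, Φ ≤ 1 → ((∃ π, J.IsPolicy π ∧ Φ ≤ J.ratio π) ↔ Φ ≤ J.PhiStar)) ∧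
    J.IsPolicy (fun t a _ x =>
      max 0 (min (J.Vcap t) (a * (((1 - J.PhiStar) * J.p + J.PhiStar * J.c) / J.c) - x))) ∧
    J.ratio (fun t a _ x =>
      max 0 (min (J.Vcap t) (a * (((1 - J.PhiStar) * J.p + J.PhiStar * J.c) / J.c) - x)))
      = J.PhiStar := by
  have hpol : J.IsPolicy (RMOwP.pistar J) := RMOwP.pistar_isPolicy hJ
  have hratio : J.ratio (RMOwP.pistar J) = J.PhiStar :=
    le_antisymm (RMOwP.ratio_le_phiStar hJ hdlo hcap hpol)
      (RMOwP.phiStar_le_ratio_pistar hJ hdlo hcap)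
  refine ⟨?_, hpol, hratio⟩
  intro Φ hΦ1
  constructor
  · rintro ⟨π, hπ, hr⟩
    exact le_trans hr (RMOwP.ratio_le_phiStar hJ hdlo hcap hπ)
  · intro hΦ
    exact ⟨RMOwP.pistar J, hpol, hratio ▸ hΦ⟩
end
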